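/- Let h₀ ∈ ℂ[[X₁,X₂]] be a formal power series whose image under the substitution X₁ ↦ X, X₂ ↦ X (the diagonal map to ℂ[[X]]) is zero. Then there exists f₀ ∈ ℂ[[X₁,X₂]] with h₀ = (X₂ − X₁)·f₀. -/

import Mathlib

/-!
The coefficient of `X₀ⁱ X₁ʲ` in `(X₁ - X₀) f` is `f_{i,j-1} - f_{i-1,j}`. Taking for `f_{a,b}` the
sum of the first `a + 1` coefficients of `h` on the antidiagonal of degree `a + b + 1`, this
difference telescopes to `h_{i,j}`. The boundary terms (`j = 0`) are full antidiagonal sums, which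
are the coefficients of the diagonal substitution of `h` and hence vanish.
-/

/-- The diagonal substitution `X₁ ↦ X`, `X₂ ↦ X` from `ℂ[[X₁,X₂]]` to `ℂ[[X]]`:
`(Σ h_{ij} X₁ⁱ X₂ʲ) ↦ Σ_n (Σ_{i+j=n} h_{ij}) Xⁿ`. -/
noncomputable def diagSubst (h : MvPowerSeries (Fin 2) ℂ) : PowerSeries ℂ :=
  PowerSeries.mk fun n => ∑ p ∈ Finset.HasAntidiagonal.antidiagonal n,
    MvPowerSeries.coeff (Finsupp.single (0 : Fin 2) p.1 + Finsupp.single 1 p.2) h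

open MvPowerSeries Finset Finsupp

namespace MvPowerSeries

variable {R : Type*} [CommRing R]

-- Only meaningful for `i ≤ n + 1`: beyond that, `n - k` truncates.
noncomputable def antidiagonalPartialSum (h : MvPowerSeries (Fin 2) R) (n i : ℕ) : R :=
  ∑ k ∈ range i, coeff (single 0 k + single 1 (n - k)) h

theorem antidiagonalPartialSum_succ (h : MvPowerSeries (Fin 2) R) (n i : ℕ) :
    antidiagonalPartialSum h n (i + 1) =
      antidiagonalPartialSum h n i + coeff (single 0 i + single 1 (n - i)) h :=
  sum_range_succ _ _

theorem antidiagonalPartialSum_self_add_one {h : MvPowerSeries (Fin 2) R}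
    (hdiag : ∀ n, ∑ p ∈ antidiagonal n, coeff (single 0 p.1 + single 1 p.2) h = 0) (n : ℕ) :
    antidiagonalPartialSum h n (n + 1) = 0 := by
  rw [← hdiag n, Nat.sum_antidiagonal_eq_sum_range_succ_mk]
  rfl

noncomputable def divXSubX (h : MvPowerSeries (Fin 2) R) : MvPowerSeries (Fin 2) R :=
  fun m => antidiagonalPartialSum h (m 0 + m 1 + 1) (m 0 + 1)

theorem coeff_X_one_mul_divXSubX {h : MvPowerSeries (Fin 2) R}
    (hdiag : ∀ n, ∑ p ∈ antidiagonal n, coeff (single 0 p.1 + single 1 p.2) h = 0)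
    (m : Fin 2 →₀ ℕ) :
    coeff m (X 1 * divXSubX h) = antidiagonalPartialSum h (m 0 + m 1) (m 0 + 1) := by
  rw [X_def, coeff_monomial_mul]
  split_ifs with hm <;> rw [single_le_iff] at hm
  · rw [one_mul, coeff_apply, divXSubX]
    simp only [coe_tsub, Pi.sub_apply, single_eq_same, single_eq_of_ne zero_ne_one, tsub_zero]
    congr 1
    omega
  · rw [show m 1 = 0 by omega, add_zero, antidiagonalPartialSum_self_add_one hdiag]

theorem coeff_X_zero_mul_divXSubX (h : MvPowerSeries (Fin 2) R) (m : Fin 2 →₀ ℕ) :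
    coeff m (X 0 * divXSubX h) = antidiagonalPartialSum h (m 0 + m 1) (m 0) := by
  rw [X_def, coeff_monomial_mul]
  split_ifs with hm <;> rw [single_le_iff] at hm
  · rw [one_mul, coeff_apply, divXSubX]
    simp only [coe_tsub, Pi.sub_apply, single_eq_same, single_eq_of_ne one_ne_zero, tsub_zero]
    congr 1 <;> omega
  · rw [show m 0 = 0 by omega]
    rfl

theorem eq_X_sub_X_mul_divXSubX {h : MvPowerSeries (Fin 2) R}
    (hdiag : ∀ n, ∑ p ∈ antidiagonal n, coeff (single 0 p.1 + single 1 p.2) h = 0) :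
    h = (X 1 - X 0) * divXSubX h := by
  ext m
  rw [sub_mul, map_sub, coeff_X_one_mul_divXSubX hdiag, coeff_X_zero_mul_divXSubX,
    antidiagonalPartialSum_succ, add_sub_cancel_left, Nat.add_sub_cancel_left]
  congr
  ext s
  fin_cases s <;> simp

end MvPowerSeries

/-- A two-variable power series annihilated by the diagonal substitution is a
multiple of `X₂ − X₁`. -/
theorem ker_diagonal_substitution (h₀ : MvPowerSeries (Fin 2) ℂ)
    (hz : diagSubst h₀ = 0) :
    ∃ f₀ : MvPowerSeries (Fin 2) ℂ,
      h₀ = (MvPowerSeries.X 1 - MvPowerSeries.X 0) * f₀ :=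
  ⟨_, eq_X_sub_X_mul_divXSubX fun n => by
    simpa [diagSubst] using congrArg (PowerSeries.coeff n) hz⟩
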